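/- (Richards-type decision tree inequality.) Let E be a finite set. In the generalized decision-tree model, take Ω₁(e)=Ω₂(e)={0,1}³, with μ₁(e) the mixture (2/3)·(uniform measure on {000,111}) + (1/3)·(uniform measure on {0,1}³), and μ₂(e) the mixture (1/3)·(uniform on {000,011,100,111}) + (1/3)·(uniform on {000,010,101,111}) + (1/3)·(uniform on {000,001,110,111}). For closed-upward events U,V,W ⊆ {0,1}^E, let U×V×W denote the event that the configuration of first coordinates of C lies in U, the configuration of second coordinates lies in V, and the configuration of third coordinates lies in W. Then for every generating decision tree T with random output configuration C, P(C₁∈U×V×W) ≥ P(C∈U×V×W) ≥ P(C₂∈U×V×W), where C₁ has distribution Π_e μ₁(e) and C₂ has distribution Π_e μ₂(e). -/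

import Mathlib

namespace GenDT

/-- A generating decision tree: every node queries an edge and either samples its value
from the first probability space (`node1`) or the second one (`node2`), with one child
for each possible sampled value. -/
inductive GTree (E : Type u) (Ω₁ : E → Type v) (Ω₂ : E → Type w) : Type (max u v w)
  | leaf : GTree E Ω₁ Ω₂
  | node1 (e : E) (child : Ω₁ e → GTree E Ω₁ Ω₂) : GTree E Ω₁ Ω₂
  | node2 (e : E) (child : Ω₂ e → GTree E Ω₁ Ω₂) : GTree E Ω₁ Ω₂

variable {E : Type*} [Fintype E] [DecidableEq E] {Ω₁ : E → Type*} {Ω₂ : E → Type*}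
  [∀ e, Fintype (Ω₁ e)] [∀ e, Fintype (Ω₂ e)]

/-- Along each root-to-leaf path, every edge of `rem` is queried exactly once. -/
def GTree.complete : GTree E Ω₁ Ω₂ → Finset E → Prop
  | .leaf, rem => rem = ∅
  | .node1 e child, rem => e ∈ rem ∧ ∀ x, (child x).complete (rem.erase e)
  | .node2 e child, rem => e ∈ rem ∧ ∀ x, (child x).complete (rem.erase e)

/-- The probability that the run of the tree outputs exactly the configuration `C`,
when values at `node1`/`node2` nodes are sampled independently with mass functions
`m₁`/`m₂`. -/
def GTree.mass (m₁ : ∀ e, Ω₁ e → ℝ) (m₂ : ∀ e, Ω₂ e → ℝ) :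
    GTree E Ω₁ Ω₂ → (∀ e, Ω₁ e ⊕ Ω₂ e) → ℝ
  | .leaf, _ => 1
  | .node1 e child, C =>
      match C e with
      | .inl x => m₁ e x * (child x).mass m₁ m₂ C
      | .inr _ => 0
  | .node2 e child, C =>
      match C e with
      | .inl _ => 0
      | .inr x => m₂ e x * (child x).mass m₁ m₂ C

/-- Mass function of `C₁`, the configuration sampled entirely from the first spaces. -/
def mass1 (m₁ : ∀ e, Ω₁ e → ℝ) (C : ∀ e, Ω₁ e ⊕ Ω₂ e) : ℝ :=
  ∏ e, match C e with
       | .inl x => m₁ e x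
       | .inr _ => 0

/-- Mass function of `C₂`, the configuration sampled entirely from the second spaces. -/
def mass2 (m₂ : ∀ e, Ω₂ e → ℝ) (C : ∀ e, Ω₁ e ⊕ Ω₂ e) : ℝ :=
  ∏ e, match C e with
       | .inl _ => 0
       | .inr x => m₂ e x

/-- Probability of an event under a mass function on a finite configuration space. -/
noncomputable def PrOf {Ω : Type*} [Fintype Ω] (mass : Ω → ℝ) (A : Set Ω) : ℝ :=
  ∑ x : Ω, A.indicator mass x

/-- An event of configurations in `{0,1}^E` is closed upward if it is preserved by
turning more coordinates to `true`. -/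
def UpwardClosed (A : Set (E → Bool)) : Prop :=
  ∀ C₁ C₂ : E → Bool, C₁ ∈ A → (∀ e, C₁ e = true → C₂ e = true) → C₂ ∈ A

/-- Triples of bits. -/
abbrev B3 : Type := Bool × Bool × Bool

/-- The triple of bits carried by a value of `Ω₁(e) ⊔ Ω₂(e)` (here `Ω₁ = Ω₂ = {0,1}³`). -/
def bits : B3 ⊕ B3 → B3
  | .inl x => x
  | .inr x => x

/-- `μ₁(e)`: the mixture `(2/3)·Unif{000,111} + (1/3)·Unif({0,1}³)`. -/
noncomputable def massR₁ : (e : E) → B3 → ℝ := fun _ x =>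
  (2 / 3) * (if x = (false, false, false) ∨ x = (true, true, true) then 1 / 2 else 0)
    + (1 / 3) * (1 / 8)

/-- `μ₂(e)`: the mixture `(1/3)·Unif{000,011,100,111} + (1/3)·Unif{000,010,101,111}
+ (1/3)·Unif{000,001,110,111}`. -/
noncomputable def massR₂ : (e : E) → B3 → ℝ := fun _ x =>
  (1 / 3) * (if x = (false, false, false) ∨ x = (false, true, true) ∨
               x = (true, false, false) ∨ x = (true, true, true) then 1 / 4 else 0)
    + (1 / 3) * (if x = (false, false, false) ∨ x = (false, true, false) ∨
               x = (true, false, true) ∨ x = (true, true, true) then 1 / 4 else 0)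
    + (1 / 3) * (if x = (false, false, false) ∨ x = (false, false, true) ∨
               x = (true, true, false) ∨ x = (true, true, true) then 1 / 4 else 0)

/-- The event `U × V × W`: the configurations of first, second and third coordinates
lie in `U`, `V` and `W` respectively. -/
def CoordEvent₃ (U V W : Set (E → Bool)) : Set (E → B3 ⊕ B3) :=
  {C | (fun e => (bits (C e)).1) ∈ U ∧ (fun e => (bits (C e)).2.1) ∈ V ∧
       (fun e => (bits (C e)).2.2) ∈ W}

/-! The proof is by induction on the tree, comparing it with the product measures on the edges
it has yet to query. Expanding the root query of a tree `node1 e child` (or of a product measure)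
turns the expectation of a test function `f` into an average of the expectations of its
restrictions `f(· with e := x)`; so, as long as the test functions are closed under such
restrictions, one only has to compare `μ₁(e)` and `μ₂(e)` on a single edge, pointwise in the
other edges. For indicators of `U × V × W` with upward-closed `U, V, W`, the restriction to one
edge is a product `u(a) v(b) w(c)` of monotone nonnegative functions of the three bits; such a
product satisfies `g(a,b,c) + g(¬a,¬b,¬c) ≤ g(000) + g(111)`, and `μ₁(e) - μ₂(e)` is a positive
combination of exactly these three differences. -/

section PiSplit

variable {ι : Type*} [Fintype ι] [DecidableEq ι] {β : ι → Type*} [∀ i, Fintype (β i)]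

theorem card_mul_sum_eq_sum_sum_update (i : ι) (H : β i → (∀ j, β j) → ℝ) :
    Fintype.card (β i) * ∑ C, H (C i) C = ∑ w, ∑ C, H w (Function.update C i w) := by
  set σ := Equiv.piSplitAt i β
  have hσ_apply : ∀ p, σ.symm p i = p.1 := fun p => by simp [σ]
  have hσ_update : ∀ w p, Function.update (σ.symm p) i w = σ.symm (w, p.2) := fun w p => by
    rw [Equiv.eq_symm_apply]
    ext j
    · simp [σ]
    · simp [σ, j.2]
  simp_rw [← σ.symm.sum_comp, hσ_apply, hσ_update, Fintype.sum_prod_type, Finset.sum_const,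
    Finset.card_univ, nsmul_eq_mul, Finset.mul_sum]

theorem sum_le_sum_of_card_mul_le (i : ι) {F G : (∀ j, β j) → ℝ}
    (h : Fintype.card (β i) * ∑ C, F C ≤ Fintype.card (β i) * ∑ C, G C) :
    ∑ C, F C ≤ ∑ C, G C := by
  rcases (Fintype.card (β i)).eq_zero_or_pos with hcard | hcard
  · have : IsEmpty (∀ j, β j) := ⟨fun C => (Fintype.card_eq_zero_iff.1 hcard).false (C i)⟩
    simp
  · exact le_of_mul_le_mul_left h (by exact_mod_cast hcard)

end PiSplit

def prodMass {ι : Type*} {β : ι → Type*} (m : ∀ i, β i → ℝ) (s : Finset ι) (C : ∀ i, β i) : ℝ :=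
  ∏ i ∈ s, m i (C i)

theorem prodMass_nonneg {ι : Type*} {β : ι → Type*} {m : ∀ i, β i → ℝ} (hm : ∀ i x, 0 ≤ m i x)
    (s : Finset ι) (C : ∀ i, β i) : 0 ≤ prodMass m s C :=
  Finset.prod_nonneg fun i _ => hm i (C i)

theorem prodMass_update_of_notMem {ι : Type*} [DecidableEq ι] {β : ι → Type*}
    (m : ∀ i, β i → ℝ) {s : Finset ι} {i : ι} (hi : i ∉ s) (C : ∀ i, β i) (v : β i) :
    prodMass m s (Function.update C i v) = prodMass m s C :=
  Finset.prod_congr rfl fun j hj => by rw [Function.update_of_ne (ne_of_mem_of_not_mem hj hi)]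

theorem card_mul_sum_prodMass_mul {ι : Type*} [Fintype ι] [DecidableEq ι] {β : ι → Type*}
    [∀ i, Fintype (β i)] (m : ∀ i, β i → ℝ) {s : Finset ι} {i : ι} (hi : i ∈ s)
    (f : (∀ j, β j) → ℝ) :
    Fintype.card (β i) * ∑ C, prodMass m s C * f C
      = ∑ w, m i w * ∑ C, prodMass m (s.erase i) C * f (Function.update C i w) := by
  have hsplit : ∀ C, prodMass m s C = m i (C i) * prodMass m (s.erase i) C := fun C =>
    (Finset.mul_prod_erase s (fun j => m j (C j)) hi).symm
  simp_rw [hsplit, mul_assoc]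
  rw [card_mul_sum_eq_sum_sum_update i (fun w C => m i w * (prodMass m (s.erase i) C * f C))]
  simp_rw [prodMass_update_of_notMem m (Finset.notMem_erase i s), Finset.mul_sum]

section SumMass

variable {ι : Type*} [Fintype ι] [DecidableEq ι] {α₁ α₂ : ι → Type*} [∀ i, Fintype (α₁ i)]
  [∀ i, Fintype (α₂ i)]

theorem card_mul_sum_prodMass_inl_mul (m₁ : ∀ i, α₁ i → ℝ) {s : Finset ι} {i : ι} (hi : i ∈ s)
    (f : (∀ j, α₁ j ⊕ α₂ j) → ℝ) :
    Fintype.card (α₁ i ⊕ α₂ i) * ∑ C, prodMass (fun j => Sum.elim (m₁ j) (fun _ => 0)) s C * f C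
      = ∑ x, m₁ i x * ∑ C, prodMass (fun j => Sum.elim (m₁ j) (fun _ => 0)) (s.erase i) C
          * f (Function.update C i (.inl x)) := by
  rw [card_mul_sum_prodMass_mul (β := fun j => α₁ j ⊕ α₂ j) _ hi]
  simp [Fintype.sum_sum_type]

theorem card_mul_sum_prodMass_inr_mul (m₂ : ∀ i, α₂ i → ℝ) {s : Finset ι} {i : ι} (hi : i ∈ s)
    (f : (∀ j, α₁ j ⊕ α₂ j) → ℝ) :
    Fintype.card (α₁ i ⊕ α₂ i) * ∑ C, prodMass (fun j => Sum.elim (fun _ => 0) (m₂ j)) s C * f C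
      = ∑ x, m₂ i x * ∑ C, prodMass (fun j => Sum.elim (fun _ => 0) (m₂ j)) (s.erase i) C
          * f (Function.update C i (.inr x)) := by
  rw [card_mul_sum_prodMass_mul (β := fun j => α₁ j ⊕ α₂ j) _ hi]
  simp [Fintype.sum_sum_type]

end SumMass

namespace GTree

section Mass

variable {ι : Type*} {α₁ α₂ : ι → Type*} {m₁ : ∀ i, α₁ i → ℝ} {m₂ : ∀ i, α₂ i → ℝ}

theorem mass_node1 (i : ι) (child : α₁ i → GTree ι α₁ α₂) (C : ∀ i, α₁ i ⊕ α₂ i) :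
    (node1 i child).mass m₁ m₂ C
      = Sum.elim (fun x => m₁ i x * (child x).mass m₁ m₂ C) (fun _ => 0) (C i) := by
  rcases h : C i with x | x <;> simp [GTree.mass, h]

theorem mass_node2 (i : ι) (child : α₂ i → GTree ι α₁ α₂) (C : ∀ i, α₁ i ⊕ α₂ i) :
    (node2 i child).mass m₁ m₂ C
      = Sum.elim (fun _ => 0) (fun x => m₂ i x * (child x).mass m₁ m₂ C) (C i) := by
  rcases h : C i with x | x <;> simp [GTree.mass, h]

theorem mass_update_of_notMem [DecidableEq ι] {T : GTree ι α₁ α₂} {s : Finset ι}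
    (hT : T.complete s) {i : ι} (hi : i ∉ s) (C : ∀ i, α₁ i ⊕ α₂ i) (v : α₁ i ⊕ α₂ i) :
    T.mass m₁ m₂ (Function.update C i v) = T.mass m₁ m₂ C := by
  induction T generalizing s with
  | leaf => rfl
  | node1 j child ih =>
    have hchild := fun x => ih x (hT.2 x) fun h => hi (Finset.mem_of_mem_erase h)
    simp only [mass_node1, hchild, Function.update_of_ne (ne_of_mem_of_not_mem hT.1 hi)]
  | node2 j child ih =>
    have hchild := fun x => ih x (hT.2 x) fun h => hi (Finset.mem_of_mem_erase h)
    simp only [mass_node2, hchild, Function.update_of_ne (ne_of_mem_of_not_mem hT.1 hi)]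

theorem card_mul_sum_node1_mul [Fintype ι] [DecidableEq ι] [∀ i, Fintype (α₁ i)]
    [∀ i, Fintype (α₂ i)] {i : ι} {child : α₁ i → GTree ι α₁ α₂} {s : Finset ι}
    (hT : (node1 i child).complete s) (f : (∀ j, α₁ j ⊕ α₂ j) → ℝ) :
    Fintype.card (α₁ i ⊕ α₂ i) * ∑ C, (node1 i child).mass m₁ m₂ C * f C
      = ∑ x, m₁ i x * ∑ C, (child x).mass m₁ m₂ C * f (Function.update C i (.inl x)) := by
  have hchild x := mass_update_of_notMem (m₁ := m₁) (m₂ := m₂) (hT.2 x) (Finset.notMem_erase i s)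
  simp_rw [mass_node1]
  rw [card_mul_sum_eq_sum_sum_update i (fun w C =>
    Sum.elim (fun x => m₁ i x * (child x).mass m₁ m₂ C) (fun _ => 0) w * f C)]
  simp [Fintype.sum_sum_type, hchild, Finset.mul_sum, mul_assoc]

theorem card_mul_sum_node2_mul [Fintype ι] [DecidableEq ι] [∀ i, Fintype (α₁ i)]
    [∀ i, Fintype (α₂ i)] {i : ι} {child : α₂ i → GTree ι α₁ α₂} {s : Finset ι}
    (hT : (node2 i child).complete s) (f : (∀ j, α₁ j ⊕ α₂ j) → ℝ) :
    Fintype.card (α₁ i ⊕ α₂ i) * ∑ C, (node2 i child).mass m₁ m₂ C * f C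
      = ∑ x, m₂ i x * ∑ C, (child x).mass m₁ m₂ C * f (Function.update C i (.inr x)) := by
  have hchild x := mass_update_of_notMem (m₁ := m₁) (m₂ := m₂) (hT.2 x) (Finset.notMem_erase i s)
  simp_rw [mass_node2]
  rw [card_mul_sum_eq_sum_sum_update i (fun w C =>
    Sum.elim (fun _ => 0) (fun x => m₂ i x * (child x).mass m₁ m₂ C) w * f C)]
  simp [Fintype.sum_sum_type, hchild, Finset.mul_sum, mul_assoc]

end Mass

end GTree

structure EdgewiseDominates {ι : Type*} [DecidableEq ι] {α₁ α₂ : ι → Type*}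
    [∀ i, Fintype (α₁ i)] [∀ i, Fintype (α₂ i)] (m₁ : ∀ i, α₁ i → ℝ) (m₂ : ∀ i, α₂ i → ℝ)
    (𝓕 : Set ((∀ i, α₁ i ⊕ α₂ i) → ℝ)) : Prop where
  update_mem : ∀ f ∈ 𝓕, ∀ i w, (fun C => f (Function.update C i w)) ∈ 𝓕
  sum_inr_le_sum_inl : ∀ f ∈ 𝓕, ∀ i C,
    ∑ x, m₂ i x * f (Function.update C i (.inr x))
      ≤ ∑ x, m₁ i x * f (Function.update C i (.inl x))

theorem EdgewiseDominates.sum_mul_sum_le {ι : Type*} [Fintype ι] [DecidableEq ι]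
    {α₁ α₂ : ι → Type*} [∀ i, Fintype (α₁ i)] [∀ i, Fintype (α₂ i)] {m₁ : ∀ i, α₁ i → ℝ}
    {m₂ : ∀ i, α₂ i → ℝ} {𝓕 : Set ((∀ i, α₁ i ⊕ α₂ i) → ℝ)} (h𝓕 : EdgewiseDominates m₁ m₂ 𝓕)
    {M : (∀ i, α₁ i ⊕ α₂ i) → ℝ} (hM : ∀ C, 0 ≤ M C) {f : (∀ i, α₁ i ⊕ α₂ i) → ℝ} (hf : f ∈ 𝓕)
    (i : ι) :
    ∑ x, m₂ i x * ∑ C, M C * f (Function.update C i (.inr x))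
      ≤ ∑ x, m₁ i x * ∑ C, M C * f (Function.update C i (.inl x)) := by
  simp_rw [Finset.mul_sum, mul_left_comm (m₂ i _), mul_left_comm (m₁ i _)]
  rw [Finset.sum_comm, Finset.sum_comm (s := Finset.univ (α := α₁ i))]
  gcongr with C
  simp_rw [← Finset.mul_sum]
  exact mul_le_mul_of_nonneg_left (h𝓕.sum_inr_le_sum_inl f hf i C) (hM C)

namespace GTree

variable {m₁ : ∀ e, Ω₁ e → ℝ} {m₂ : ∀ e, Ω₂ e → ℝ} {𝓕 : Set ((∀ e, Ω₁ e ⊕ Ω₂ e) → ℝ)}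

theorem sum_mass_mul_le_sum_prodMass (hm₁ : ∀ e x, 0 ≤ m₁ e x) (hm₂ : ∀ e x, 0 ≤ m₂ e x)
    (h𝓕 : EdgewiseDominates m₁ m₂ 𝓕) {T : GTree E Ω₁ Ω₂} {s : Finset E} (hT : T.complete s)
    {f : (∀ e, Ω₁ e ⊕ Ω₂ e) → ℝ} (hf : f ∈ 𝓕) :
    ∑ C, T.mass m₁ m₂ C * f C
      ≤ ∑ C, prodMass (fun e => Sum.elim (m₁ e) (fun _ => 0)) s C * f C := by
  induction T generalizing s f with
  | leaf =>
    obtain rfl : s = ∅ := hT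
    simp [GTree.mass, prodMass]
  | node1 e child ih =>
    apply sum_le_sum_of_card_mul_le e
    rw [card_mul_sum_node1_mul hT, card_mul_sum_prodMass_inl_mul _ hT.1]
    exact Finset.sum_le_sum fun x _ =>
      mul_le_mul_of_nonneg_left (ih x (hT.2 x) (h𝓕.update_mem f hf e _)) (hm₁ e x)
  | node2 e child ih =>
    apply sum_le_sum_of_card_mul_le e
    rw [card_mul_sum_node2_mul hT, card_mul_sum_prodMass_inl_mul _ hT.1]
    calc _ ≤ ∑ x, m₂ e x * ∑ C, prodMass (fun e => Sum.elim (m₁ e) (fun _ => 0)) (s.erase e) C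
            * f (Function.update C e (.inr x)) :=
          Finset.sum_le_sum fun x _ =>
            mul_le_mul_of_nonneg_left (ih x (hT.2 x) (h𝓕.update_mem f hf e _)) (hm₂ e x)
      _ ≤ _ := h𝓕.sum_mul_sum_le (prodMass_nonneg (fun e w => by cases w <;> simp [hm₁]) _) hf e

theorem sum_prodMass_le_sum_mass_mul (hm₁ : ∀ e x, 0 ≤ m₁ e x) (hm₂ : ∀ e x, 0 ≤ m₂ e x)
    (h𝓕 : EdgewiseDominates m₁ m₂ 𝓕) {T : GTree E Ω₁ Ω₂} {s : Finset E} (hT : T.complete s)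
    {f : (∀ e, Ω₁ e ⊕ Ω₂ e) → ℝ} (hf : f ∈ 𝓕) :
    ∑ C, prodMass (fun e => Sum.elim (fun _ => 0) (m₂ e)) s C * f C
      ≤ ∑ C, T.mass m₁ m₂ C * f C := by
  induction T generalizing s f with
  | leaf =>
    obtain rfl : s = ∅ := hT
    simp [GTree.mass, prodMass]
  | node1 e child ih =>
    apply sum_le_sum_of_card_mul_le e
    rw [card_mul_sum_node1_mul hT, card_mul_sum_prodMass_inr_mul _ hT.1]
    calc _ ≤ ∑ x, m₁ e x * ∑ C, prodMass (fun e => Sum.elim (fun _ => 0) (m₂ e)) (s.erase e) C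
            * f (Function.update C e (.inl x)) :=
          h𝓕.sum_mul_sum_le (prodMass_nonneg (fun e w => by cases w <;> simp [hm₂]) _) hf e
      _ ≤ _ :=
          Finset.sum_le_sum fun x _ =>
            mul_le_mul_of_nonneg_left (ih x (hT.2 x) (h𝓕.update_mem f hf e _)) (hm₁ e x)
  | node2 e child ih =>
    apply sum_le_sum_of_card_mul_le e
    rw [card_mul_sum_node2_mul hT, card_mul_sum_prodMass_inr_mul _ hT.1]
    exact Finset.sum_le_sum fun x _ =>
      mul_le_mul_of_nonneg_left (ih x (hT.2 x) (h𝓕.update_mem f hf e _)) (hm₂ e x)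

end GTree

theorem UpwardClosed.isUpperSet {ι : Type*} {A : Set (ι → Bool)} (hA : UpwardClosed A) :
    IsUpperSet A :=
  fun _ _ hle hmem => hA _ _ hmem fun i => Bool.le_iff_imp.1 (hle i)

theorem IsUpperSet.monotone_indicator_one {α M : Type*} [Preorder α] [Zero M] [One M] [Preorder M]
    [ZeroLEOneClass M] {s : Set α} (hs : IsUpperSet s) : Monotone (s.indicator (1 : α → M)) := by
  intro a b hab
  by_cases ha : a ∈ s
  · simp [ha, hs hab ha]
  · simp [ha, Set.indicator_nonneg]

theorem mul_mul_add_mul_mul_not_le {u v w : Bool → ℝ} (hu : Monotone u) (hv : Monotone v)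
    (hw : Monotone w) (hu₀ : 0 ≤ u false) (hv₀ : 0 ≤ v false) (hw₀ : 0 ≤ w false) (a b c : Bool) :
    u a * v b * w c + u (!a) * v (!b) * w (!c)
      ≤ u false * v false * w false + u true * v true * w true := by
  have hu₁ := hu (Bool.false_le true)
  have hv₁ := hv (Bool.false_le true)
  have hw₁ := hw (Bool.false_le true)
  have hvw : 0 ≤ (u true - u false) * (v true * w true - v false * w false) :=
    mul_nonneg (by linarith) (by nlinarith)
  have huw : 0 ≤ (v true - v false) * (u true * w true - u false * w false) :=
    mul_nonneg (by linarith) (by nlinarith)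
  have huv : 0 ≤ (w true - w false) * (u true * v true - u false * v false) :=
    mul_nonneg (by linarith) (by nlinarith)
  cases a <;> cases b <;> cases c <;> simp <;> nlinarith

theorem massR₁_nonneg {ι : Type*} (i : ι) (x : B3) : 0 ≤ massR₁ i x := by
  unfold massR₁
  positivity

theorem massR₂_nonneg {ι : Type*} (i : ι) (x : B3) : 0 ≤ massR₂ i x := by
  unfold massR₂
  positivity

theorem sum_massR₂_mul_le_sum_massR₁_mul {ι : Type*} (i : ι) {g : B3 → ℝ}
    (h₁ : g (true, false, false) + g (false, true, true)
      ≤ g (false, false, false) + g (true, true, true))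
    (h₂ : g (false, true, false) + g (true, false, true)
      ≤ g (false, false, false) + g (true, true, true))
    (h₃ : g (false, false, true) + g (true, true, false)
      ≤ g (false, false, false) + g (true, true, true)) :
    ∑ x, massR₂ i x * g x ≤ ∑ x, massR₁ i x * g x := by
  -- `∑ (massR₁ - massR₂) g = (3 (g 000 + g 111) - ∑ over the three complementary pairs) / 24`
  simp only [Fintype.sum_prod_type, Fintype.sum_bool, massR₁, massR₂]
  norm_num [Prod.ext_iff]
  linarith

theorem indicator_coordEvent₃ {ι : Type*} (U V W : Set (ι → Bool)) (C : ι → B3 ⊕ B3) :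
    (CoordEvent₃ U V W).indicator (1 : (ι → B3 ⊕ B3) → ℝ) C
      = U.indicator 1 (fun i => (bits (C i)).1) * V.indicator 1 (fun i => (bits (C i)).2.1)
        * W.indicator 1 (fun i => (bits (C i)).2.2) := by
  classical
  simp only [Set.indicator_apply, CoordEvent₃, Set.mem_ofPred_eq, Pi.one_apply]
  split_ifs <;> simp_all

theorem indicator_coordEvent₃_update {ι : Type*} [DecidableEq ι] (U V W : Set (ι → Bool))
    (C : ι → B3 ⊕ B3) (i : ι) (w : B3 ⊕ B3) :
    (CoordEvent₃ U V W).indicator (1 : (ι → B3 ⊕ B3) → ℝ) (Function.update C i w)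
      = U.indicator 1 (Function.update (fun j => (bits (C j)).1) i (bits w).1)
        * V.indicator 1 (Function.update (fun j => (bits (C j)).2.1) i (bits w).2.1)
        * W.indicator 1 (Function.update (fun j => (bits (C j)).2.2) i (bits w).2.2) := by
  have hcoord (p : B3 → Bool) :
      (fun j => p (bits (Function.update C i w j)))
        = Function.update (fun j => p (bits (C j))) i (p (bits w)) :=
    funext (Function.apply_update (fun _ x => p (bits x)) C i w)
  rw [indicator_coordEvent₃, hcoord Prod.fst, hcoord (fun x => x.2.1), hcoord (fun x => x.2.2)]

def upperCoordEventIndicators (ι : Type*) : Set ((ι → B3 ⊕ B3) → ℝ) :=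
  {f | ∃ U V W : Set (ι → Bool), IsUpperSet U ∧ IsUpperSet V ∧ IsUpperSet W ∧
    f = (CoordEvent₃ U V W).indicator 1}

theorem edgewiseDominates_massR (ι : Type*) [DecidableEq ι] :
    EdgewiseDominates massR₁ massR₂ (upperCoordEventIndicators ι) where
  update_mem := by
    rintro _ ⟨U, V, W, hU, hV, hW, rfl⟩ i w
    have hmono (b : Bool) : Monotone fun c : ι → Bool => Function.update c i b :=
      fun _ _ h => update_le_update_iff.2 ⟨le_rfl, fun j _ => h j⟩
    refine ⟨_, _, _, hU.preimage (hmono (bits w).1), hV.preimage (hmono (bits w).2.1),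
      hW.preimage (hmono (bits w).2.2), funext fun C => ?_⟩
    rw [indicator_coordEvent₃_update, indicator_coordEvent₃]
    rfl
  sum_inr_le_sum_inl := by
    rintro _ ⟨U, V, W, hU, hV, hW, rfl⟩ i C
    simp only [indicator_coordEvent₃_update]
    have hmono {A : Set (ι → Bool)} (hA : IsUpperSet A) (c : ι → Bool) :
        Monotone fun b => A.indicator (1 : (ι → Bool) → ℝ) (Function.update c i b) :=
      (IsUpperSet.monotone_indicator_one hA).comp Function.update_mono
    have hnonneg (A : Set (ι → Bool)) (c : ι → Bool) : 0 ≤ A.indicator (1 : (ι → Bool) → ℝ) c :=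
      Set.indicator_nonneg (fun _ _ => zero_le_one) c
    have hpair := mul_mul_add_mul_mul_not_le (hmono hU fun j => (bits (C j)).1)
      (hmono hV fun j => (bits (C j)).2.1) (hmono hW fun j => (bits (C j)).2.2)
      (hnonneg _ _) (hnonneg _ _) (hnonneg _ _)
    -- `bits (.inl x)` and `bits (.inr x)` are both `x`, so the two sides weigh the same `g`.
    exact sum_massR₂_mul_le_sum_massR₁_mul i (hpair true false false) (hpair false true false)
      (hpair false false true)

theorem PrOf_eq_sum_mul_indicator {Ω : Type*} [Fintype Ω] (M : Ω → ℝ) (A : Set Ω) :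
    PrOf M A = ∑ x, M x * A.indicator 1 x := by
  classical
  simp [PrOf, Set.indicator_apply]

theorem mass1_eq_prodMass {ι : Type*} [Fintype ι] {α₁ α₂ : ι → Type*} (m₁ : ∀ i, α₁ i → ℝ) :
    mass1 (Ω₂ := α₂) m₁ = prodMass (fun i => Sum.elim (m₁ i) (fun _ => 0)) Finset.univ :=
  funext fun C => Finset.prod_congr rfl fun i _ => by rcases C i with x | x <;> rfl

theorem mass2_eq_prodMass {ι : Type*} [Fintype ι] {α₁ α₂ : ι → Type*} (m₂ : ∀ i, α₂ i → ℝ) :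
    mass2 (Ω₁ := α₁) m₂ = prodMass (fun i => Sum.elim (fun _ => 0) (m₂ i)) Finset.univ :=
  funext fun C => Finset.prod_congr rfl fun i _ => by rcases C i with x | x <;> rfl

/-- Richards-type decision tree inequality:
`P(C₁ ∈ U×V×W) ≥ P(C ∈ U×V×W) ≥ P(C₂ ∈ U×V×W)`. -/
theorem richards_inequality
    (U V W : Set (E → Bool))
    (hU : UpwardClosed U) (hV : UpwardClosed V) (hW : UpwardClosed W)
    (T : GTree E (fun _ => B3) (fun _ => B3)) (hT : T.complete Finset.univ) :
    PrOf (mass1 (massR₁ (E := E))) (CoordEvent₃ U V W)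
        ≥ PrOf (T.mass massR₁ massR₂) (CoordEvent₃ U V W) ∧
      PrOf (T.mass massR₁ massR₂) (CoordEvent₃ U V W)
        ≥ PrOf (mass2 (massR₂ (E := E))) (CoordEvent₃ U V W) := by
  have hf : (CoordEvent₃ U V W).indicator 1 ∈ upperCoordEventIndicators E :=
    ⟨U, V, W, hU.isUpperSet, hV.isUpperSet, hW.isUpperSet, rfl⟩
  simp only [PrOf_eq_sum_mul_indicator, mass1_eq_prodMass, mass2_eq_prodMass, ge_iff_le]
  exact ⟨GTree.sum_mass_mul_le_sum_prodMass massR₁_nonneg massR₂_nonneg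
      (edgewiseDominates_massR E) hT hf,
    GTree.sum_prodMass_le_sum_mass_mul massR₁_nonneg massR₂_nonneg
      (edgewiseDominates_massR E) hT hf⟩

end GenDT
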